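/- arXiv:1511.06023 — 10 statements merged into one kernel-verified Lean document; each statement's English description precedes it below -/
import Mathlib

section
/- For every finite simple graph G, the burning number b(G) equals the minimum length k of a sequence (x_1, ..., x_k) of vertices of G satisfying only the covering condition V(G) = N^{k-1}[x_1] ∪ N^{k-2}[x_2] ∪ ... ∪ N^0[x_k]; that is, the separation condition dist(x_i, x_j) ≥ j - i in the definition of a burning sequence is redundant. -/
/-!
Take a covering sequence `x_1, …, x_k` of minimum length `k = b(G)` and make it separated
greedily from left to right. If `dist(x_j, x_i) < i - j` for some `j < i`, then
`N^{k-i}[x_i] ⊆ N^{k-j}[x_j]`, so `x_i` may be replaced by any vertex without losing the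
covering. A vertex at distance at least `i - j` from every earlier `x_j` exists: otherwise
every vertex lies in some `N^{i-1-j}[x_j]`, and `x_1, …, x_{i-1}` would be a covering
sequence shorter than `k`.
-/

/-- `ball G u k` is `N^k[u]`: the set of vertices `v` reachable from `u`
with `dist_G(u,v) ≤ k`. -/
def ball {V : Type*} (G : SimpleGraph V) (u : V) (k : ℕ) : Set V :=
  {v | G.Reachable u v ∧ G.dist u v ≤ k}

/-- The burning number of `G`: the minimum length `k` of a sequence
`(x_1, …, x_k)` of vertices with `V(G) = N^{k-1}[x_1] ∪ ⋯ ∪ N^0[x_k]`. -/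
noncomputable def burningNumber {V : Type*} (G : SimpleGraph V) : ℕ :=
  sInf {k | ∃ x : Fin k → V, ∀ v : V, ∃ i : Fin k, v ∈ ball G (x i) (k - 1 - (i : ℕ))}

/-- A burning sequence: the covering condition together with the separation
condition `dist(x_i, x_j) ≥ j - i` (which holds automatically when `x_i` and `x_j`
are not reachable from each other, the distance then being infinite). -/
def IsBurningSeq {V : Type*} (G : SimpleGraph V) {k : ℕ} (x : Fin k → V) : Prop :=
  (∀ v : V, ∃ i : Fin k, v ∈ ball G (x i) (k - 1 - (i : ℕ))) ∧
  (∀ i j : Fin k, (j : ℕ) - (i : ℕ) ≤ G.dist (x i) (x j) ∨ ¬ G.Reachable (x i) (x j))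

section

variable {V : Type*} {G : SimpleGraph V}

def IsCovering (G : SimpleGraph V) {k : ℕ} (x : Fin k → V) : Prop :=
  ∀ v : V, ∃ i : Fin k, v ∈ ball G (x i) (k - 1 - (i : ℕ))

def SeparatedBelow (G : SimpleGraph V) {k : ℕ} (x : Fin k → V) (n : ℕ) : Prop :=
  ∀ i j : Fin k, i < j → (j : ℕ) < n →
    (j : ℕ) - (i : ℕ) ≤ G.dist (x i) (x j) ∨ ¬ G.Reachable (x i) (x j)

lemma ball_subset_ball_of_dist_add_le {u w : V} {r s : ℕ} (huw : G.Reachable u w)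
    (hrs : G.dist u w + r ≤ s) : ball G w r ⊆ ball G u s := fun v ⟨hwv, hd⟩ =>
  ⟨huw.trans hwv, (hwv.dist_triangle_right u).trans (by omega)⟩

lemma isBurningSeq_of_separatedBelow {k : ℕ} {x : Fin k → V} (hcov : IsCovering G x)
    (hsep : SeparatedBelow G x k) : IsBurningSeq G x := by
  refine ⟨hcov, fun i j => ?_⟩
  by_cases hij : i < j
  · exact hsep i j hij j.isLt
  · exact Or.inl (by omega)

lemma exists_far_of_lt_burningNumber {n : ℕ} (hn : n < burningNumber G) (y : Fin n → V) :
    ∃ w, ∀ j : Fin n, (n - (j : ℕ)) ≤ G.dist (y j) w ∨ ¬ G.Reachable (y j) w := by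
  have hy : ¬ IsCovering G y := fun h => Nat.notMem_of_lt_sInf hn ⟨y, h⟩
  obtain ⟨w, hw⟩ : ∃ w, ∀ j, w ∉ ball G (y j) (n - 1 - j) := by simpa [IsCovering] using hy
  refine ⟨w, fun j => ?_⟩
  by_contra! hclose
  exact hw j ⟨hclose.2, by omega⟩

lemma isCovering_update {k : ℕ} {x : Fin k → V} (hx : IsCovering G x) {i j : Fin k}
    (hji : j ≠ i) (hsub : ball G (x i) (k - 1 - i) ⊆ ball G (x j) (k - 1 - j)) (w : V) :
    IsCovering G (Function.update x i w) := by
  intro v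
  obtain ⟨m, hm⟩ := hx v
  by_cases hmi : m = i
  · subst hmi
    exact ⟨j, by simpa [Function.update_of_ne hji] using hsub hm⟩
  · exact ⟨m, by simpa [Function.update_of_ne hmi] using hm⟩

lemma separatedBelow_update {k : ℕ} {x : Fin k → V} {i : Fin k} (hx : SeparatedBelow G x i)
    {w : V} (hw : ∀ j : Fin k, j < i →
      (i : ℕ) - (j : ℕ) ≤ G.dist (x j) w ∨ ¬ G.Reachable (x j) w) :
    SeparatedBelow G (Function.update x i w) (i + 1) := by
  intro a b hab hb
  have hai : a ≠ i := by omega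
  rcases Nat.lt_succ_iff_lt_or_eq.mp hb with hb | hb
  · rw [Function.update_of_ne hai, Function.update_of_ne (by omega)]
    exact hx a b hab hb
  · obtain rfl : b = i := Fin.ext hb
    rw [Function.update_of_ne hai, Function.update_self]
    exact hw a hab

lemma exists_separatedBelow_succ {k : ℕ} (hk : k ≤ burningNumber G) {x : Fin k → V}
    (hcov : IsCovering G x) {i : Fin k} (hsep : SeparatedBelow G x i) :
    ∃ x' : Fin k → V, IsCovering G x' ∧ SeparatedBelow G x' (i + 1) := by
  by_cases hfar : ∀ j : Fin k, j < i →
      (i : ℕ) - (j : ℕ) ≤ G.dist (x j) (x i) ∨ ¬ G.Reachable (x j) (x i)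
  · refine ⟨x, hcov, ?_⟩
    simpa using separatedBelow_update hsep hfar
  push Not at hfar
  obtain ⟨j, hji, hdist, hreach⟩ := hfar
  have hball : ball G (x i) (k - 1 - i) ⊆ ball G (x j) (k - 1 - j) :=
    ball_subset_ball_of_dist_add_le hreach (by omega)
  obtain ⟨w, hw⟩ := exists_far_of_lt_burningNumber (i.isLt.trans_le hk)
    fun t : Fin i => x (Fin.castLE i.isLt.le t)
  exact ⟨Function.update x i w, isCovering_update hcov hji.ne hball w,
    separatedBelow_update hsep fun j' hj' => hw ⟨j', hj'⟩⟩

lemma IsCovering.exists_isBurningSeq {k : ℕ} {x : Fin k → V} (hx : IsCovering G x)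
    (hk : k ≤ burningNumber G) : ∃ y : Fin k → V, IsBurningSeq G y := by
  suffices h : ∀ n ≤ k, ∃ y : Fin k → V, IsCovering G y ∧ SeparatedBelow G y n by
    obtain ⟨y, hcov, hsep⟩ := h k le_rfl
    exact ⟨y, isBurningSeq_of_separatedBelow hcov hsep⟩
  intro n hn
  induction n with
  | zero => exact ⟨x, hx, fun _ _ _ h => absurd h (Nat.not_lt_zero _)⟩
  | succ n ih =>
    obtain ⟨y, hcov, hsep⟩ := ih (by omega)
    exact exists_separatedBelow_succ (i := ⟨n, by omega⟩) hk hcov hsep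

end

theorem burning_separation_redundant_general {V : Type*} (G : SimpleGraph V) :
    sInf {k | ∃ x : Fin k → V, IsBurningSeq G x} = burningNumber G := by
  change _ = sInf {k | ∃ x : Fin k → V, IsCovering G x}
  have hsub : {k | ∃ x : Fin k → V, IsBurningSeq G x} ⊆
      {k | ∃ x : Fin k → V, IsCovering G x} := fun _ ⟨x, hx⟩ => ⟨x, hx.1⟩
  rcases Set.eq_empty_or_nonempty {k | ∃ x : Fin k → V, IsCovering G x} with hempty | hne
  · rw [hempty, Set.subset_empty_iff] at hsub
    rw [hsub, hempty]
  obtain ⟨x, hx⟩ := Nat.sInf_mem hne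
  obtain ⟨y, hy⟩ := hx.exists_isBurningSeq le_rfl
  exact IsLeast.csInf_eq ⟨⟨y, hy⟩, fun m hm => Nat.sInf_le (hsub hm)⟩

/-- The separation condition in the definition of the burning number is redundant:
the minimum length of a burning sequence equals the minimum length of a sequence
satisfying only the covering condition. -/
theorem burning_separation_redundant {V : Type*} [Fintype V] (G : SimpleGraph V) :
    sInf {k | ∃ x : Fin k → V, IsBurningSeq G x} = burningNumber G :=
  burning_separation_redundant_general G
end

section
/- For every finite simple graph G and every nonnegative integer k such that G has a distance-k-dominating set, b(G) ≤ γ_k(G) + k, where γ_k(G) is the distance-k-domination number of G. -/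
/-- `D` is a distance-`k`-dominating set of `G`. -/
def IsDistDomSet {V : Type*} (G : SimpleGraph V) (k : ℕ) (D : Finset V) : Prop :=
  ∀ v : V, ∃ u ∈ D, v ∈ ball G u k

/-- The distance-`k`-domination number of `G`. -/
noncomputable def distDomNumber {V : Type*} (G : SimpleGraph V) (k : ℕ) : ℕ :=
  sInf {m | ∃ D : Finset V, D.card = m ∧ IsDistDomSet G k D}

/-
Burn the vertices of a minimum distance-`k`-dominating set `D` first, one per round, and then
arbitrary vertices for `k` more rounds. After `|D| + k` rounds the fire started at the `j`-th
vertex of `D` has spread for at least `k` steps, so it has reached every vertex that vertex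
dominates.
-/

theorem ball_mono {V : Type*} (G : SimpleGraph V) (u : V) {k l : ℕ} (hkl : k ≤ l) :
    ball G u k ⊆ ball G u l :=
  fun _ ⟨hreach, hdist⟩ => ⟨hreach, hdist.trans hkl⟩

theorem exists_isDistDomSet_card_eq_distDomNumber {V : Type*} (G : SimpleGraph V) (k : ℕ)
    (h : ∃ D : Finset V, IsDistDomSet G k D) :
    ∃ D : Finset V, D.card = distDomNumber G k ∧ IsDistDomSet G k D := by
  obtain ⟨D, hD⟩ := h
  exact Nat.sInf_mem (s := {m | ∃ D : Finset V, D.card = m ∧ IsDistDomSet G k D})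
    ⟨D.card, D, rfl, hD⟩

theorem burningNumber_le_card_add {V : Type*} (G : SimpleGraph V) {k : ℕ} {D : Finset V}
    (hD : IsDistDomSet G k D) : burningNumber G ≤ D.card + k := by
  cases isEmpty_or_nonempty V with
  | inl _ =>
    exact (Nat.sInf_le ⟨Fin.elim0, isEmptyElim⟩ : burningNumber G ≤ 0).trans (Nat.zero_le _)
  | inr hV =>
    let x : Fin (D.card + k) → V :=
      Fin.append (fun j => (D.equivFin.symm j : V)) (fun _ => hV.some)
    refine Nat.sInf_le ⟨x, fun v => ?_⟩
    obtain ⟨u, hu, hv⟩ := hD v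
    let j := D.equivFin ⟨u, hu⟩
    refine ⟨Fin.castAdd k j, ?_⟩
    have hxj : x (Fin.castAdd k j) = u := by simp [x, j]
    rw [hxj]
    exact ball_mono G u (by simp only [Fin.val_castAdd]; omega) hv

theorem burning_le_distDom_add_general {V : Type*} (G : SimpleGraph V) (k : ℕ)
    (h : ∃ D : Finset V, IsDistDomSet G k D) :
    burningNumber G ≤ distDomNumber G k + k := by
  obtain ⟨D, hcard, hD⟩ := exists_isDistDomSet_card_eq_distDomNumber G k h
  exact hcard ▸ burningNumber_le_card_add G hD

theorem burning_le_distDom_add {V : Type*} [Fintype V] (G : SimpleGraph V) (k : ℕ)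
    (h : ∃ D : Finset V, IsDistDomSet G k D) :
    burningNumber G ≤ distDomNumber G k + k :=
  burning_le_distDom_add_general G k h
end

section
/- (Meir–Moon) If G is a finite connected simple graph of order n with n ≥ k + 1, where k is a nonnegative integer, then the distance-k-domination number satisfies γ_k(G) ≤ n/(k+1). -/
/-!
Fix a breadth-first search tree rooted at some vertex `r`, with parent map `p`. If some vertex
is farther than `k` from `r`, let `u` be a deepest vertex and `w = p^[k] u`. The subtree below `w`
contains the path `u, p u, …, w`, so it has at least `k + 1` vertices; all of them lie within
distance `k` of `w`, since none is deeper than `u`; and deleting it leaves a connected graph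
(every remaining vertex still has its path to `r`) that contains the parent of `w`. If at least
`k + 1` vertices remain, induction on the order dominates them with at most a `(k+1)`-th of their
number, and `w` is added; otherwise `w` alone dominates `G`.
-/

section

variable {V : Type*} {G : SimpleGraph V}

namespace SimpleGraph

lemma Reachable.dist_lt_card [Finite V] {u v : V} (h : G.Reachable u v) :
    G.dist u v < Nat.card V := by
  have := Fintype.ofFinite V
  obtain ⟨p, hp, hlen⟩ := h.exists_path_of_dist
  exact Nat.card_eq_fintype_card (α := V) ▸ hlen ▸ hp.length_lt

lemma Reachable.dist_map_le {W : Type*} {H : SimpleGraph W} (f : G →g H) {u v : V}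
    (h : G.Reachable u v) : H.dist (f u) (f v) ≤ G.dist u v := by
  obtain ⟨p, hp⟩ := h.exists_walk_length_eq_dist
  calc H.dist (f u) (f v) ≤ (p.map f).length := dist_le _
    _ = G.dist u v := by rw [Walk.length_map, hp]

lemma Connected.exists_adj_dist_add_one_eq (hG : G.Connected) (r : V) {v : V} (hv : v ≠ r) :
    ∃ p, G.Adj p v ∧ G.dist r p + 1 = G.dist r v := by
  obtain ⟨q, hq⟩ := hG.exists_walk_length_eq_dist v r
  cases q with
  | nil => exact absurd rfl hv
  | @cons _ p _ hadj q =>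
    refine ⟨p, hadj.symm, le_antisymm ?_ ?_⟩
    · have := dist_le q.reverse
      rw [Walk.length_cons, dist_comm] at hq
      rw [Walk.length_reverse] at this
      omega
    · simpa [dist_eq_one_iff_adj.mpr hadj.symm] using hG.dist_triangle (u := r) (v := p) (w := v)

structure IsBFSParent (G : SimpleGraph V) (r : V) (p : V → V) : Prop where
  map_root : p r = r
  adj : ∀ v, v ≠ r → G.Adj (p v) v
  dist_add_one : ∀ v, v ≠ r → G.dist r (p v) + 1 = G.dist r v

lemma Connected.exists_isBFSParent (hG : G.Connected) (r : V) : ∃ p, G.IsBFSParent r p := by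
  classical
  choose! p hadj hdist using fun v (hv : v ≠ r) => hG.exists_adj_dist_add_one_eq r hv
  refine ⟨Function.update p r r, ?_, fun v hv => ?_, fun v hv => ?_⟩
  · simp
  · simpa [hv] using hadj v hv
  · simpa [hv] using hdist v hv

namespace IsBFSParent

variable {r : V} {p : V → V}

lemma dist_pos (hp : G.IsBFSParent r p) {v : V} (hv : v ≠ r) : 0 < G.dist r v := by
  have := hp.dist_add_one v hv
  omega

lemma dist_iterate (hp : G.IsBFSParent r p) (m : ℕ) (x : V) :
    G.dist r (p^[m] x) = G.dist r x - m := by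
  induction m generalizing x with
  | zero => rfl
  | succ m ih =>
    rw [Function.iterate_succ_apply, ih]
    by_cases hx : x = r
    · simp [hx, hp.map_root]
    · have := hp.dist_add_one x hx
      omega

lemma dist_eq_add_of_iterate_eq (hp : G.IsBFSParent r p) {m : ℕ} {x w : V} (hw : w ≠ r)
    (h : p^[m] x = w) : G.dist r x = G.dist r w + m := by
  have hdist := hp.dist_iterate m x
  have := hp.dist_pos hw
  rw [h] at hdist
  omega

lemma iterate_succ_ne (hp : G.IsBFSParent r p) {w : V} (hw : w ≠ r) (m : ℕ) :
    p^[m + 1] w ≠ w := by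
  intro h
  have := hp.dist_eq_add_of_iterate_eq hw h
  omega

lemma dist_iterate_le (hp : G.IsBFSParent r p) (m : ℕ) (x : V) : G.dist (p^[m] x) x ≤ m := by
  induction m with
  | zero => simp
  | succ m ih =>
    rw [Function.iterate_succ_apply']
    by_cases hy : p^[m] x = r
    · rw [hy, hp.map_root, ← hy]
      omega
    · have hadj := hp.adj _ hy
      calc G.dist (p (p^[m] x)) x ≤ G.dist (p (p^[m] x)) (p^[m] x) + G.dist (p^[m] x) x :=
            hadj.reachable.dist_triangle_left x
        _ ≤ m + 1 := by rw [dist_eq_one_iff_adj.mpr hadj]; omega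

lemma induce_connected (hp : G.IsBFSParent r p) {s : Set V} (hr : r ∈ s)
    (hs : ∀ x ∈ s, p x ∈ s) :
    (G.induce s).Connected := by
  have hreach (x : V) (hx : x ∈ s) : (G.induce s).Reachable ⟨x, hx⟩ ⟨r, hr⟩ := by
    induction hd : G.dist r x using Nat.strong_induction_on generalizing x with
    | _ n ih =>
      by_cases hxr : x = r
      · subst hxr
        rfl
      · have hadj : (G.induce s).Adj ⟨x, hx⟩ ⟨p x, hs x hx⟩ := (hp.adj x hxr).symm
        exact hadj.reachable.trans
          (ih _ (by have := hp.dist_add_one x hxr; omega) _ (hs x hx) rfl)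
  have : Nonempty s := ⟨⟨r, hr⟩⟩
  exact .mk fun a b => (hreach a.1 a.2).trans (hreach b.1 b.2).symm

end IsBFSParent

end SimpleGraph

variable {k : ℕ}

structure IsPeel (G : SimpleGraph V) (k : ℕ) (w : V) (A : Set V) : Prop where
  dist_le : ∀ x ∈ A, G.dist w x ≤ k
  le_ncard : k + 1 ≤ A.ncard
  connected_induce_compl : (G.induce Aᶜ).Connected
  exists_adj_compl : ∃ y ∉ A, G.Adj w y

lemma SimpleGraph.Connected.exists_isPeel [Finite V] (hG : G.Connected) {r v : V}
    (hv : k < G.dist r v) : ∃ w A, IsPeel G k w A := by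
  obtain ⟨p, hp⟩ := hG.exists_isBFSParent r
  have : Nonempty V := ⟨r⟩
  obtain ⟨u, hu⟩ := Finite.exists_max (G.dist r ·)
  have hku : k < G.dist r u := hv.trans_le (hu v)
  set w := p^[k] u
  have hw : G.dist r w = G.dist r u - k := hp.dist_iterate k u
  have hwr : w ≠ r := fun h => by
    rw [h, SimpleGraph.dist_self] at hw
    omega
  refine ⟨w, {x | ∃ m, p^[m] x = w}, ⟨?_, ?_, ?_, p w, ?_, (hp.adj w hwr).symm⟩⟩
  · rintro x ⟨m, hm⟩
    have := hp.dist_eq_add_of_iterate_eq hwr hm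
    have := hu x
    calc G.dist w x ≤ m := hm ▸ hp.dist_iterate_le m x
      _ ≤ k := by omega
  · let f (j : Fin (k + 1)) : {x | ∃ m, p^[m] x = w} :=
      ⟨p^[j] u, k - j, by rw [← Function.iterate_add_apply, Nat.sub_add_cancel j.is_le]⟩
    have hf : Function.Injective f := fun i j hij => by
      have := congrArg (G.dist r ·.1) hij
      simp only [f, hp.dist_iterate] at this
      omega
    simpa [Nat.card_coe_set_eq] using Nat.card_le_card_of_injective f hf
  · refine hp.induce_connected (fun ⟨m, hm⟩ => hwr ?_) fun x hx ⟨m, hm⟩ =>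
      hx ⟨m + 1, hm⟩
    rwa [Function.iterate_fixed hp.map_root, eq_comm] at hm
  · exact fun ⟨m, hm⟩ => hp.iterate_succ_ne hwr m hm

lemma IsPeel.dist_le_of_ncard_compl_le [Finite V] {w : V} {A : Set V} (hA : IsPeel G k w A)
    (hsmall : Aᶜ.ncard ≤ k) (v : V) : G.dist w v ≤ k := by
  by_cases hv : v ∈ A
  · exact hA.dist_le v hv
  obtain ⟨y, hy, hadj⟩ := hA.exists_adj_compl
  have hreach := hA.connected_induce_compl (⟨y, hy⟩ : ↥Aᶜ) ⟨v, hv⟩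
  have hyv : G.dist y v < Aᶜ.ncard := by
    rw [← Nat.card_coe_set_eq]
    exact (hreach.dist_map_le (SimpleGraph.Embedding.induce _).toHom).trans_lt hreach.dist_lt_card
  calc G.dist w v ≤ G.dist w y + G.dist y v := hadj.reachable.dist_triangle_left v
    _ ≤ k := by rw [SimpleGraph.dist_eq_one_iff_adj.mpr hadj]; omega

lemma isDistDomSet_iff_of_connected (hG : G.Connected) {D : Finset V} :
    IsDistDomSet G k D ↔ ∀ v, ∃ u ∈ D, G.dist u v ≤ k := by
  simp only [IsDistDomSet, ball, Set.mem_ofPred_eq, hG.preconnected _ _, true_and]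

lemma IsDistDomSet.insert_of_induce [DecidableEq V] (hG : G.Connected) {s : Set V} {w : V}
    (hw : ∀ x ∉ s, G.dist w x ≤ k) {D : Finset s} (hD : IsDistDomSet (G.induce s) k D) :
    IsDistDomSet G k (insert w (D.map (Function.Embedding.subtype _))) := by
  refine (isDistDomSet_iff_of_connected hG).2 fun v => ?_
  by_cases hv : v ∈ s
  · obtain ⟨u, hu, hreach, hdist⟩ := hD ⟨v, hv⟩
    exact ⟨u, Finset.mem_insert_of_mem (Finset.mem_map_of_mem _ hu),
      (hreach.dist_map_le (SimpleGraph.Embedding.induce s).toHom).trans hdist⟩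
  · exact ⟨w, Finset.mem_insert_self _ _, hw v hv⟩

lemma distDomNumber_le_card {D : Finset V} (hD : IsDistDomSet G k D) :
    distDomNumber G k ≤ D.card :=
  Nat.sInf_le ⟨D, rfl, hD⟩

theorem exists_isDistDomSet_mul_card_le [Finite V] (hG : G.Connected) (hn : k + 1 ≤ Nat.card V) :
    ∃ D : Finset V, IsDistDomSet G k D ∧ (k + 1) * D.card ≤ Nat.card V := by
  induction hcard : Nat.card V using Nat.strong_induction_on generalizing V with
  | _ n ih =>
  subst hcard
  by_cases hrad : ∃ r, ∀ v, G.dist r v ≤ k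
  · obtain ⟨r, hr⟩ := hrad
    refine ⟨{r}, (isDistDomSet_iff_of_connected hG).2 fun v => ?_, by simpa using hn⟩
    exact ⟨r, Finset.mem_singleton_self r, hr v⟩
  push Not at hrad
  obtain ⟨r⟩ := hG.nonempty
  obtain ⟨v, hv⟩ := hrad r
  obtain ⟨w, A, hA⟩ := hG.exists_isPeel hv
  have hsplit : (k + 1) + Nat.card ↥Aᶜ ≤ Nat.card V := by
    rw [Nat.card_coe_set_eq, ← Set.ncard_add_ncard_compl A]
    exact Nat.add_le_add_right hA.le_ncard _
  have hlarge : k + 1 ≤ Nat.card ↥Aᶜ := by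
    by_contra! hsmall
    obtain ⟨u, hu⟩ := hrad w
    have := hA.dist_le_of_ncard_compl_le (by rw [← Nat.card_coe_set_eq]; omega) u
    omega
  obtain ⟨D, hD, hDcard⟩ := ih _ (by omega) hA.connected_induce_compl hlarge rfl
  classical
  refine ⟨_, hD.insert_of_induce hG fun x hx => hA.dist_le x (Set.notMem_compl_iff.1 hx), ?_⟩
  calc (k + 1) * (insert w (D.map (Function.Embedding.subtype _))).card
      ≤ (k + 1) * (D.card + 1) := by
        gcongr
        exact (Finset.card_insert_le _ _).trans (by simp)
    _ = (k + 1) * D.card + (k + 1) := by ring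
    _ ≤ Nat.card V := by omega

end

/-- Meir–Moon: if `G` is connected of order `n ≥ k + 1`, then `γ_k(G) ≤ n / (k + 1)`. -/
theorem meir_moon {V : Type*} [Fintype V] (G : SimpleGraph V) (k : ℕ)
    (hG : G.Connected) (hn : k + 1 ≤ Fintype.card V) :
    (distDomNumber G k : ℝ) ≤ (Fintype.card V : ℝ) / (k + 1) := by
  rw [← Nat.card_eq_fintype_card] at hn ⊢
  obtain ⟨D, hD, hDcard⟩ := exists_isDistDomSet_mul_card_le hG hn
  have hγ : (k + 1) * distDomNumber G k ≤ Nat.card V :=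
    (Nat.mul_le_mul_left _ (distDomNumber_le_card hD)).trans hDcard
  rw [le_div_iff₀ (by positivity), mul_comm]
  exact_mod_cast hγ
end

section
/- If G is a finite connected simple graph of order n, then b(G) ≤ 2⌈√n⌉ − 1. -/
/-!
Fix a breadth-first search tree rooted at `s`. If some vertex is deeper than `r`, take a deepest
one `x` and its ancestor `u` at height `r` above it: the subtree of `u` has at least `r + 1`
vertices, all within distance `r` of `u` because nothing is deeper than `x`. Removing it leaves
a smaller tree, so `j` balls of radius `r` cover any connected graph of order at most
`j (r + 1)`. With `k = ⌈√n⌉` balls of radius `k - 1` centred at `x_1, …, x_k`, the burning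
sequence of length `2k - 1` whose first `k` terms are these centres burns the graph.
-/

open Function Finset

lemma mapsTo_filter_not_exists_iterate_eq {α : Type*} {p : α → α} {A : Finset α}
    (hA : Set.MapsTo p A A) (u : α) [DecidablePred fun v ↦ ¬∃ m, p^[m] v = u] :
    Set.MapsTo p ↑(A.filter fun v ↦ ¬∃ m, p^[m] v = u) ↑(A.filter fun v ↦ ¬∃ m, p^[m] v = u) := by
  intro v hv
  simp only [coe_filter, Set.mem_ofPred_eq] at hv ⊢
  exact ⟨hA hv.1, fun ⟨m, hm⟩ ↦ hv.2 ⟨m + 1, hm⟩⟩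

namespace SimpleGraph

variable {V : Type*} {G : SimpleGraph V}

lemma Connected.exists_dist_le_one_dist_eq_sub_one (hG : G.Connected) (s v : V) :
    ∃ w, G.dist w v ≤ 1 ∧ G.dist s w = G.dist s v - 1 := by
  obtain ⟨q, hq⟩ := (hG s v).exists_walk_length_eq_dist
  have h_last : G.dist q.penultimate v ≤ 1 :=
    (dist_le (q.drop (q.length - 1))).trans (by rw [Walk.drop_length]; omega)
  refine ⟨q.penultimate, h_last, ?_⟩
  have h_le : G.dist s q.penultimate ≤ q.length - 1 := by simpa using dist_le q.dropLast
  have h_ge := hG.dist_triangle (u := s) (v := q.penultimate) (w := v)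
  omega

/-- A breadth-first search parent map towards the root `s`; the root is its own parent. -/
structure IsParentMap (G : SimpleGraph V) (s : V) (p : V → V) : Prop where
  dist_le_one : ∀ v, G.dist (p v) v ≤ 1
  dist_root : ∀ v, G.dist s (p v) = G.dist s v - 1

lemma Connected.exists_isParentMap (hG : G.Connected) (s : V) : ∃ p, G.IsParentMap s p := by
  choose p hp using hG.exists_dist_le_one_dist_eq_sub_one s
  exact ⟨p, fun v ↦ (hp v).1, fun v ↦ (hp v).2⟩

namespace IsParentMap

variable {s : V} {p : V → V}

lemma dist_root_iterate (hp : G.IsParentMap s p) (m : ℕ) (v : V) :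
    G.dist s (p^[m] v) = G.dist s v - m := by
  induction m with
  | zero => simp
  | succ m ih => rw [iterate_succ_apply', hp.dist_root, ih]; omega

lemma dist_iterate_le (hG : G.Connected) (hp : G.IsParentMap s p) (m : ℕ) (v : V) :
    G.dist (p^[m] v) v ≤ m := by
  induction m with
  | zero => simp
  | succ m ih =>
    rw [iterate_succ_apply']
    have := hG.dist_triangle (u := p (p^[m] v)) (v := p^[m] v) (w := v)
    have := hp.dist_le_one (p^[m] v)
    omega

lemma dist_le_of_iterate_eq (hG : G.Connected) (hp : G.IsParentMap s p) {x v : V} {r m : ℕ}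
    (hr : r < G.dist s x) (hvx : G.dist s v ≤ G.dist s x) (hm : p^[m] v = p^[r] x) :
    G.dist (p^[r] x) v ≤ r := by
  have hu := hp.dist_root_iterate r x
  have hv := hp.dist_root_iterate m v
  have hdist := hp.dist_iterate_le hG m v
  rw [hm] at hv hdist
  omega

lemma le_card_filter_iterate_eq (hp : G.IsParentMap s p) {A : Finset V}
    (hA : Set.MapsTo p A A) {x : V} (hx : x ∈ A) {r : ℕ} (hr : r < G.dist s x)
    [DecidablePred fun v ↦ ∃ m, p^[m] v = p^[r] x] :
    r + 1 ≤ #(A.filter fun v ↦ ∃ m, p^[m] v = p^[r] x) := by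
  classical
  have h_inj : Set.InjOn (fun i ↦ p^[i] x) (range (r + 1)) := by
    intro a ha b hb hab
    simp only [coe_range, Set.mem_Iio] at ha hb
    have ha := hp.dist_root_iterate a x
    have hb := hp.dist_root_iterate b x
    simp only at hab
    rw [hab] at ha
    omega
  calc r + 1 = #((range (r + 1)).image fun i ↦ p^[i] x) := by
        rw [card_image_of_injOn h_inj, card_range]
    _ ≤ _ := by
      refine card_le_card fun y hy ↦ ?_
      obtain ⟨i, hi, rfl⟩ := mem_image.mp hy
      refine mem_filter.mpr ⟨hA.iterate i hx, r - i, ?_⟩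
      rw [← iterate_add_apply, Nat.sub_add_cancel (by simpa [Nat.lt_succ_iff] using hi)]

lemma exists_ball_and_mapsTo (hG : G.Connected) (hp : G.IsParentMap s p) {A : Finset V}
    (hA : Set.MapsTo p A A) {r : ℕ} (h_deep : ∃ v ∈ A, r < G.dist s v) :
    ∃ u, ∃ A' : Finset V, Set.MapsTo p A' A' ∧ #A' + (r + 1) ≤ #A ∧
      ∀ v ∈ A, v ∉ A' → G.dist u v ≤ r := by
  classical
  obtain ⟨v₀, hv₀, hr₀⟩ := h_deep
  obtain ⟨x, hx, hx_max⟩ := A.exists_max_image (G.dist s) ⟨v₀, hv₀⟩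
  have hr : r < G.dist s x := hr₀.trans_le (hx_max v₀ hv₀)
  refine ⟨p^[r] x, A.filter fun v ↦ ¬∃ m, p^[m] v = p^[r] x,
    mapsTo_filter_not_exists_iterate_eq hA _, ?_, fun v hv hv' ↦ ?_⟩
  · have := card_filter_add_card_filter_not (s := A) fun v ↦ ∃ m, p^[m] v = p^[r] x
    have := hp.le_card_filter_iterate_eq hA hx hr
    omega
  · obtain ⟨m, hm⟩ : ∃ m, p^[m] v = p^[r] x := by simpa [hv] using hv'
    exact hp.dist_le_of_iterate_eq hG hr (hx_max v hv) hm

lemma exists_cover (hG : G.Connected) (hp : G.IsParentMap s p) (r j : ℕ) (A : Finset V)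
    (hA : Set.MapsTo p A A) (h_card : #A ≤ j * (r + 1)) :
    ∃ c : Fin j → V, ∀ v ∈ A, ∃ i, G.dist (c i) v ≤ r := by
  induction j generalizing A with
  | zero => simp_all
  | succ j ih =>
    by_cases h_shallow : ∀ v ∈ A, G.dist s v ≤ r
    · exact ⟨fun _ ↦ s, fun v hv ↦ ⟨0, h_shallow v hv⟩⟩
    push Not at h_shallow
    obtain ⟨u, A', hA', h_card', hu⟩ := hp.exists_ball_and_mapsTo hG hA h_shallow
    obtain ⟨c, hc⟩ := ih A' hA' (by rw [Nat.succ_mul] at h_card; omega)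
    refine ⟨Fin.cons u c, fun v hv ↦ ?_⟩
    by_cases hv' : v ∈ A'
    · obtain ⟨i, hi⟩ := hc v hv'
      exact ⟨i.succ, by simpa using hi⟩
    · exact ⟨0, by simpa using hu v hv hv'⟩

end IsParentMap

lemma Connected.exists_cover_of_card_le [Fintype V] (hG : G.Connected) {r j : ℕ}
    (h_card : Fintype.card V ≤ j * (r + 1)) :
    ∃ c : Fin j → V, ∀ v, ∃ i, G.dist (c i) v ≤ r := by
  obtain ⟨s⟩ := hG.nonempty
  obtain ⟨p, hp⟩ := hG.exists_isParentMap s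
  obtain ⟨c, hc⟩ := hp.exists_cover hG r j univ (by simp) h_card
  exact ⟨c, fun v ↦ hc v (mem_univ v)⟩

/-- Pad the `k` centres with `r` arbitrary vertices: the `i`-th centre then burns a ball of
radius `k + r - 1 - i ≥ r`. -/
lemma Connected.burningNumber_le_add (hG : G.Connected) {k r : ℕ} (c : Fin k → V)
    (hc : ∀ v, ∃ i, G.dist (c i) v ≤ r) : burningNumber G ≤ k + r := by
  obtain ⟨s⟩ := hG.nonempty
  refine Nat.sInf_le ⟨Fin.append c fun _ ↦ s, fun v ↦ ?_⟩
  obtain ⟨i, hi⟩ := hc v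
  refine ⟨Fin.castAdd r i, ?_, ?_⟩ <;> simp only [Fin.append_left]
  · exact hG _ _
  · simp only [Fin.val_castAdd]
    omega

end SimpleGraph

lemma Nat.le_ceil_sqrt_mul_self (n : ℕ) : n ≤ ⌈√(n : ℝ)⌉₊ * ⌈√(n : ℝ)⌉₊ := by
  have h := _root_.mul_self_le_mul_self (Real.sqrt_nonneg n) (Nat.le_ceil √(n : ℝ))
  rw [Real.mul_self_sqrt n.cast_nonneg] at h
  exact_mod_cast h

theorem burning_le_two_ceil_sqrt_sub_one {V : Type*} [Fintype V] (G : SimpleGraph V)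
    (hG : G.Connected) :
    burningNumber G ≤ 2 * ⌈Real.sqrt (Fintype.card V)⌉₊ - 1 := by
  set k := ⌈Real.sqrt (Fintype.card V)⌉₊
  obtain ⟨c, hc⟩ := hG.exists_cover_of_card_le (j := k) (r := k - 1)
    ((Nat.le_ceil_sqrt_mul_self _).trans (Nat.mul_le_mul_left k (by omega)))
  calc burningNumber G ≤ k + (k - 1) := hG.burningNumber_le_add c hc
    _ = 2 * k - 1 := by omega
end

section
/- Let T be a finite tree and let d be a nonnegative integer such that N^d[u] ≠ V(T) for every vertex u of T. Then there exist a vertex x of T and a subtree T' of T (a nonempty connected induced subgraph, or the empty graph) such that T' has at most n(T) − (d+1) vertices and V(T) \ V(T') ⊆ N^d[x]. -/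
/-!
Take a diametral path `a … b` of `T`; it has length more than `d`, so it has consecutive vertices
`x`, `y` at distance `d`, `d + 1` from `a`. Let `S` be the set of vertices closer to `y` than to
`x`, i.e. the component of `T - xy` containing `y`. Geodesics towards `y` stay in `S`, so `S` is
connected, and the `d + 1` vertices of the path from `a` to `x` are outside `S`. A vertex
`u ∉ S` reaches `b ∈ S` only through the edge `xy`, so `d(u, x) + 1 + d(y, b) = d(u, b)`, which
is at most `d(a, b)`; this gives `d(u, x) ≤ d`.
-/

namespace SimpleGraph

variable {V : Type*} {G : SimpleGraph V} {u v w x y : V}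

/-- Djoković's set `W_{yx}`. -/
def closerSet (G : SimpleGraph V) (y x : V) : Set V :=
  {u | G.dist u y < G.dist u x}

@[simp]
lemma mem_closerSet : u ∈ G.closerSet y x ↔ G.dist u y < G.dist u x := Iff.rfl

lemma Walk.dist_add_dist_of_mem_support {p : G.Walk u v} (hp : p.length = G.dist u v)
    (hw : w ∈ p.support) : G.dist u w + G.dist w v = G.dist u v := by
  classical
  rw [← length_eq_dist_of_subwalk hp (p.isSubwalk_takeUntil hw),
    ← length_eq_dist_of_subwalk hp (p.isSubwalk_dropUntil hw), ← Walk.length_append,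
    p.take_spec hw, hp]

lemma Walk.dist_getVert {p : G.Walk u v} (hp : p.length = G.dist u v) {i : ℕ}
    (hi : i ≤ p.length) : G.dist u (p.getVert i) = i := by
  rw [← length_eq_dist_of_subwalk hp (p.isSubwalk_take i), Walk.take_length]
  omega

lemma Walk.mem_closerSet_of_mem_support {p : G.Walk u y} (hp : p.length = G.dist u y)
    (hu : u ∈ G.closerSet y x) (hw : w ∈ p.support) : w ∈ G.closerSet y x := by
  classical
  have hsplit := p.dist_add_dist_of_mem_support hp hw
  have htri := (p.takeUntil w hw).reachable.dist_triangle_left x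
  rw [mem_closerSet] at hu ⊢
  omega

variable (G) in
lemma disjoint_closerSet (x y : V) : Disjoint (G.closerSet x y) (G.closerSet y x) :=
  Set.disjoint_left.mpr fun _ h h' => lt_asymm (mem_closerSet.mp h) h'

lemma Connected.induce_closerSet_connected (hG : G.Connected)
    (hne : (G.closerSet y x).Nonempty) : (G.induce (G.closerSet y x)).Connected := by
  obtain ⟨u₀, hu₀⟩ := hne
  have reach_y : ∀ u (hu : u ∈ G.closerSet y x), ∃ hy : y ∈ G.closerSet y x,
      (G.induce (G.closerSet y x)).Reachable ⟨u, hu⟩ ⟨y, hy⟩ := by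
    intro u hu
    obtain ⟨p, hp⟩ := hG.exists_walk_length_eq_dist u y
    have hsupp : ∀ w ∈ p.support, w ∈ G.closerSet y x := fun w hw =>
      p.mem_closerSet_of_mem_support hp hu hw
    exact ⟨hsupp y p.end_mem_support, ⟨p.induce _ hsupp⟩⟩
  obtain ⟨hy, -⟩ := reach_y u₀ hu₀
  rw [connected_iff_exists_forall_reachable]
  exact ⟨⟨y, hy⟩, fun ⟨u, hu⟩ => (reach_y u hu).2.symm⟩

lemma Connected.dist_add_one_le_ncard_closerSet [Finite V] (hG : G.Connected)
    (hu : u ∈ G.closerSet x y) : G.dist u x + 1 ≤ (G.closerSet x y).ncard := by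
  classical
  obtain ⟨p, hp⟩ := hG.exists_walk_length_eq_dist u x
  have hsupp : (p.support.toFinset : Set V) ⊆ G.closerSet x y := fun w hw =>
    p.mem_closerSet_of_mem_support hp hu (List.mem_toFinset.mp hw)
  calc G.dist u x + 1 = p.support.toFinset.card := by
        rw [List.toFinset_card_of_nodup (p.isPath_of_length_eq_dist hp).support_nodup,
          Walk.length_support, hp]
    _ ≤ (G.closerSet x y).ncard := by
        rw [← Set.ncard_coe_finset]
        exact Set.ncard_le_ncard hsupp

lemma Connected.ncard_closerSet_le [Fintype V] (hG : G.Connected) (hu : u ∈ G.closerSet x y) :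
    (G.closerSet y x).ncard ≤ Fintype.card V - (G.dist u x + 1) := by
  have hcard := hG.dist_add_one_le_ncard_closerSet hu
  have hsub := Set.ncard_le_ncard (G.disjoint_closerSet x y).subset_compl_right
  have hsum := Set.ncard_add_ncard_compl (G.closerSet y x)
  rw [Nat.card_eq_fintype_card] at hsum
  omega

lemma IsTree.mem_closerSet_of_notMem (hG : G.IsTree) (hxy : G.Adj x y)
    (hu : u ∉ G.closerSet y x) : u ∈ G.closerSet x y := by
  have := hG.dist_ne_of_adj u hxy
  rw [mem_closerSet] at hu ⊢
  omega

lemma IsAcyclic.length_eq_dist_of_isPath (hG : G.IsAcyclic) {p : G.Walk u v}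
    (hp : p.IsPath) : p.length = G.dist u v := by
  obtain ⟨q, hq, hqlen⟩ := p.reachable.exists_path_of_dist
  rw [← hqlen, Subtype.mk.inj (hG.subsingleton_path u v |>.elim ⟨p, hp⟩ ⟨q, hq⟩)]

lemma IsTree.dist_eq_of_mem_closerSet (hG : G.IsTree) (hxy : G.Adj x y)
    (hu : u ∈ G.closerSet x y) (hv : v ∈ G.closerSet y x) :
    G.dist u v = G.dist u x + 1 + G.dist y v := by
  obtain ⟨q, hq⟩ := hG.connected.exists_walk_length_eq_dist u x
  obtain ⟨r, hr⟩ := hG.connected.exists_walk_length_eq_dist v y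
  have hW : (q.append (Walk.cons hxy r.reverse)).IsPath := by
    rw [Walk.isPath_def, Walk.support_append, Walk.support_cons, List.tail_cons,
      Walk.support_reverse, List.nodup_append]
    refine ⟨(q.isPath_of_length_eq_dist hq).support_nodup,
      List.nodup_reverse.mpr (r.isPath_of_length_eq_dist hr).support_nodup,
      fun a ha b hb hab => ?_⟩
    subst hab
    exact (G.disjoint_closerSet x y).ne_of_mem (q.mem_closerSet_of_mem_support hq hu ha)
      (r.mem_closerSet_of_mem_support hr hv (List.mem_reverse.mp hb)) rfl
  rw [← hG.isAcyclic.length_eq_dist_of_isPath hW, Walk.length_append, Walk.length_cons,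
    Walk.length_reverse, hq, hr, dist_comm (u := v)]
  omega

end SimpleGraph

theorem tree_prune_ball {V : Type*} [Fintype V] (T : SimpleGraph V) (hT : T.IsTree)
    (d : ℕ) (h : ∀ u : V, ball T u d ≠ Set.univ) :
    ∃ (x : V) (S : Set V), (S.Nonempty → (T.induce S).Connected) ∧
      S.ncard ≤ Fintype.card V - (d + 1) ∧ Sᶜ ⊆ ball T x d := by
  have hconn := hT.connected
  have : Nonempty V := hconn.nonempty
  have hdiam : ∀ u v, T.dist u v ≤ T.diam := fun _ _ =>
    SimpleGraph.dist_le_diam (SimpleGraph.connected_iff_ediam_ne_top.mp hconn)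
  obtain ⟨a, b, hab⟩ := T.exists_dist_eq_diam
  have hd : d < T.dist a b := by
    obtain ⟨w, hw⟩ := Set.ne_univ_iff_exists_notMem _ |>.mp (h a)
    have : ¬ T.dist a w ≤ d := fun hle => hw ⟨hconn a w, hle⟩
    have := hdiam a w
    omega
  obtain ⟨p, hp⟩ := hconn.exists_walk_length_eq_dist a b
  set x := p.getVert d
  set y := p.getVert (d + 1)
  have hxy : T.Adj x y := p.adj_getVert_succ (by omega)
  have hax : T.dist a x = d := p.dist_getVert hp (by omega)
  have hay : T.dist a y = d + 1 := p.dist_getVert hp (by omega)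
  have hxb : T.dist a x + T.dist x b = T.dist a b :=
    p.dist_add_dist_of_mem_support hp (p.getVert_mem_support d)
  have hyb : T.dist a y + T.dist y b = T.dist a b :=
    p.dist_add_dist_of_mem_support hp (p.getVert_mem_support (d + 1))
  have ha : a ∈ T.closerSet x y := by rw [SimpleGraph.mem_closerSet]; omega
  have hb : b ∈ T.closerSet y x := by
    rw [SimpleGraph.mem_closerSet, SimpleGraph.dist_comm, SimpleGraph.dist_comm (u := b)]; omega
  refine ⟨x, T.closerSet y x, hconn.induce_closerSet_connected,
    hax ▸ hconn.ncard_closerSet_le ha, fun u hu => ⟨hconn x u, ?_⟩⟩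
  have := hT.dist_eq_of_mem_closerSet hxy (hT.mem_closerSet_of_notMem hxy hu) hb
  have := hdiam u b
  rw [SimpleGraph.dist_comm]
  omega
end

section
/- Let T be a finite tree and let d_1, ..., d_k be nonnegative integers such that (d_1 + 1) + (d_2 + 1) + ... + (d_k + 1) ≥ n(T). Then there exist vertices x_1, ..., x_k of T such that V(T) = N^{d_1}[x_1] ∪ N^{d_2}[x_2] ∪ ... ∪ N^{d_k}[x_k]. -/
/-!
Root the graph at `r` and cover by induction on the number of radii. Let `u` be a vertex farthest
from `r`. If the first radius `d₀` reaches `u` from `r`, one ball around `r` covers everything.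
Otherwise take `x` on a geodesic from `r` to `u` at distance `d₀` from `u`: the ball `N^{d₀}[x]`
contains every vertex having `x` on a geodesic from `r` (none is farther from `r` than `u`), these
include the `d₀ + 1` vertices of the geodesic from `x` to `u`, and the remaining vertices are again
closed under taking geodesics towards `r`, so the other radii cover them.
-/

namespace SimpleGraph

variable {V : Type*} {G : SimpleGraph V}

/-- The vertices `v` such that `x` lies on a geodesic from `r` to `v`. -/
def shadow (G : SimpleGraph V) (r x : V) : Set V :=
  {v | G.dist r x + G.dist x v = G.dist r v}

def IsGeodesicallyClosed (G : SimpleGraph V) (r : V) (A : Set V) : Prop :=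
  ∀ v ∈ A, ∀ w, v ∈ G.shadow r w → w ∈ A

lemma isGeodesicallyClosed_univ (r : V) : G.IsGeodesicallyClosed r Set.univ :=
  fun _ _ _ _ ↦ trivial

namespace Connected

lemma exists_dist_eq_of_le_dist (hc : G.Connected) {x u : V} {j : ℕ} (hj : j ≤ G.dist x u) :
    ∃ w, G.dist x w = j ∧ u ∈ G.shadow x w := by
  obtain ⟨p, hp⟩ := hc.exists_walk_length_eq_dist x u
  have hxw : G.dist x (p.getVert j) ≤ j := (dist_le (p.take j)).trans (by simp [Walk.take_length])
  have hwu : G.dist (p.getVert j) u ≤ G.dist x u - j := (dist_le (p.drop j)).trans (by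
    simp [Walk.drop_length, hp])
  have htri : G.dist x u ≤ G.dist x (p.getVert j) + G.dist (p.getVert j) u := hc.dist_triangle
  exact ⟨p.getVert j, by omega, by simp only [shadow, Set.mem_ofPred_eq]; omega⟩

lemma mem_shadow_trans (hc : G.Connected) {r x w v : V} (hw : w ∈ G.shadow r x)
    (hv : v ∈ G.shadow r w) : v ∈ G.shadow r x := by
  have h₁ : G.dist x v ≤ G.dist x w + G.dist w v := hc.dist_triangle
  have h₂ : G.dist r v ≤ G.dist r x + G.dist x v := hc.dist_triangle
  simp only [shadow, Set.mem_ofPred_eq] at *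
  omega

lemma mem_shadow_of_mem_shadow_of_mem_shadow (hc : G.Connected) {r x w u : V}
    (hx : u ∈ G.shadow r x) (hw : u ∈ G.shadow x w) :
    w ∈ G.shadow r x ∧ u ∈ G.shadow r w := by
  have h₁ : G.dist r w ≤ G.dist r x + G.dist x w := hc.dist_triangle
  have h₂ : G.dist r u ≤ G.dist r w + G.dist w u := hc.dist_triangle
  simp only [shadow, Set.mem_ofPred_eq] at *
  omega

lemma dist_add_one_le_ncard_setOf_mem_shadow [Finite V] (hc : G.Connected) (x u : V) :
    G.dist x u + 1 ≤ {w | u ∈ G.shadow x w}.ncard := by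
  have hpt (j : Fin (G.dist x u + 1)) : ∃ w, G.dist x w = j ∧ u ∈ G.shadow x w :=
    hc.exists_dist_eq_of_le_dist (Nat.lt_succ_iff.mp j.isLt)
  choose f hfdist hfshadow using hpt
  have hf : Function.Injective f := fun i j hij ↦ Fin.ext (by rw [← hfdist, ← hfdist, hij])
  calc G.dist x u + 1 = (Set.range f).ncard := by rw [Set.ncard_range_of_injective hf]; simp
    _ ≤ _ := Set.ncard_le_ncard (Set.range_subset_iff.mpr hfshadow)

lemma isGeodesicallyClosed_diff_shadow (hc : G.Connected) {r x : V} {A : Set V}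
    (hA : G.IsGeodesicallyClosed r A) : G.IsGeodesicallyClosed r (A \ G.shadow r x) :=
  fun v hv w hvw ↦ ⟨hA v hv.1 w hvw, fun hwx ↦ hv.2 (hc.mem_shadow_trans hwx hvw)⟩

lemma exists_ball_covering_shadow [Finite V] (hc : G.Connected) {r : V} {A : Set V}
    (hA : G.IsGeodesicallyClosed r A) {D : ℕ} (hfar : ∃ v ∈ A, D < G.dist r v) :
    ∃ x, (∀ v ∈ A ∩ G.shadow r x, G.dist x v ≤ D) ∧ D + 1 ≤ (A ∩ G.shadow r x).ncard := by
  obtain ⟨v₀, hv₀A, hv₀⟩ := hfar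
  obtain ⟨u, huA, hu⟩ := Set.exists_max_image A (G.dist r) A.toFinite ⟨v₀, hv₀A⟩
  have hDu : D < G.dist r u := hv₀.trans_le (hu v₀ hv₀A)
  obtain ⟨x, hrx, hux⟩ := hc.exists_dist_eq_of_le_dist (Nat.sub_le (G.dist r u) D)
  have hxu : G.dist x u = D := by simp only [shadow, Set.mem_ofPred_eq] at hux; omega
  refine ⟨x, fun v hv ↦ ?_, ?_⟩
  · have hxv : G.dist r x + G.dist x v = G.dist r v := hv.2
    have := hu v hv.1
    omega
  · have hgeod : {w | u ∈ G.shadow x w} ⊆ A ∩ G.shadow r x := fun w hw ↦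
      have hw' := hc.mem_shadow_of_mem_shadow_of_mem_shadow hux hw
      ⟨hA u huA w hw'.2, hw'.1⟩
    exact hxu ▸ (hc.dist_add_one_le_ncard_setOf_mem_shadow x u).trans (Set.ncard_le_ncard hgeod)

theorem exists_cover_of_isGeodesicallyClosed [Finite V] (hc : G.Connected) {r : V} {k : ℕ}
    (d : Fin k → ℕ) {A : Set V} (hA : G.IsGeodesicallyClosed r A)
    (hcard : A.ncard ≤ ∑ i, (d i + 1)) :
    ∃ x : Fin k → V, ∀ v ∈ A, ∃ i, G.dist (x i) v ≤ d i := by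
  induction k generalizing A with
  | zero =>
    have hA : A = ∅ := (Set.ncard_eq_zero A.toFinite).mp (by simpa using hcard)
    exact ⟨finZeroElim, by simp [hA]⟩
  | succ k ih =>
    by_cases hnear : ∀ v ∈ A, G.dist r v ≤ d 0
    · exact ⟨fun _ ↦ r, fun v hv ↦ ⟨0, hnear v hv⟩⟩
    push Not at hnear
    obtain ⟨x, hcovered, hlarge⟩ := hc.exists_ball_covering_shadow hA hnear
    have hrest : (A \ G.shadow r x).ncard ≤ ∑ i, (Fin.tail d i + 1) := by
      rw [← Set.ncard_inter_add_ncard_sdiff_eq_ncard A (G.shadow r x), Fin.sum_univ_succ] at hcard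
      simp only [Fin.tail]
      omega
    obtain ⟨y, hy⟩ := ih (Fin.tail d) (hc.isGeodesicallyClosed_diff_shadow hA) hrest
    refine ⟨Fin.cons x y, fun v hv ↦ ?_⟩
    by_cases hvx : v ∈ G.shadow r x
    · exact ⟨0, hcovered v ⟨hv, hvx⟩⟩
    · obtain ⟨i, hi⟩ := hy v ⟨hv, hvx⟩
      exact ⟨i.succ, hi⟩

end Connected

end SimpleGraph

theorem tree_cover_of_sum_ge {V : Type*} [Fintype V] (T : SimpleGraph V) (hT : T.IsTree)
    (k : ℕ) (d : Fin k → ℕ) (h : Fintype.card V ≤ ∑ i, (d i + 1)) :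
    ∃ x : Fin k → V, ∀ v : V, ∃ i : Fin k, v ∈ ball T (x i) (d i) := by
  have hc : T.Connected := hT.connected
  obtain ⟨r⟩ := hc.nonempty
  obtain ⟨x, hx⟩ := hc.exists_cover_of_isGeodesicallyClosed (r := r) d
    (SimpleGraph.isGeodesicallyClosed_univ r)
    (by rwa [Set.ncard_univ, Nat.card_eq_fintype_card])
  refine ⟨x, fun v ↦ ?_⟩
  obtain ⟨i, hi⟩ := hx v trivial
  exact ⟨i, hc.preconnected _ _, hi⟩
end

section
/- If G is a finite connected simple graph of order n ≥ 1, then b(G) ≤ ⌈√(2n + 1/4) − 1/2⌉. -/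
/-!
Fix a vertex `r`. Adding the vertices in order of their distance from `r`, each new vertex has an
already visited neighbour one step closer to `r`. A detour of length 2 through that neighbour (or a
last step, when the new vertex is the endpoint `z`) therefore yields a walk from `r` to `z` through
all `n` vertices of length at most `2 (n - 1) - d(r, z)`.

Let `k` be the bound, so that `2n ≤ k (k + 1)`. If every vertex lies within `k - 1` of `r`, the
single fire at `r` suffices. Otherwise take `z` with `d(r, z) ≥ k`: the walk has fewer than `k²`
positions, which split into the blocks `[m², (m + 1)²)` of length `2m + 1` for `m < k`, and the
block `m` is covered by a fire of radius `m` lit at its middle position `m (m + 1)`.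
-/

open Finset

namespace SimpleGraph

variable {V : Type*} {G : SimpleGraph V}

lemma Walk.dist_getVert_le {u v : V} (w : G.Walk u v) {i j : ℕ} (hij : i ≤ j) :
    G.dist (w.getVert i) (w.getVert j) ≤ j - i := by
  have h := dist_le ((w.drop i).take (j - i))
  rw [Walk.take_length, Walk.drop_getVert, Nat.add_sub_cancel' hij] at h
  exact h.trans inf_le_left

lemma Reachable.exists_adj_dist_add_one_eq {r a : V} (h : G.Reachable r a) (hne : r ≠ a) :
    ∃ y, G.Adj y a ∧ G.dist r y + 1 = G.dist r a := by
  obtain ⟨p, hp⟩ := h.exists_walk_length_eq_dist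
  have hnil : ¬p.Nil := fun hnil => hne hnil.eq
  have hadj := p.adj_penultimate hnil
  refine ⟨p.penultimate, hadj, le_antisymm ?_ ?_⟩
  · have hy := dist_le p.dropLast
    have hlen := p.length_dropLast_add_one hnil
    omega
  · exact dist_eq_one_iff_adj.mpr hadj ▸ hadj.reachable.dist_triangle_right r

lemma Walk.exists_detour {r z y a : V} (w : G.Walk r z) (hy : y ∈ w.support) (hadj : G.Adj y a) :
    ∃ w' : G.Walk r z, w'.length = w.length + 2 ∧ ∀ x, x = a ∨ x ∈ w.support → x ∈ w'.support := by
  classical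
  refine ⟨(w.takeUntil y hy).append ((cons hadj (cons hadj.symm nil)).append (w.dropUntil y hy)),
    ?_, ?_⟩
  · have := congrArg Walk.length (w.take_spec hy)
    simp only [Walk.length_append, Walk.length_cons, Walk.length_nil] at this ⊢
    omega
  · rintro x (rfl | hx)
    · simp
    · rw [← w.take_spec hy, Walk.mem_support_append_iff] at hx
      simp only [Walk.mem_support_append_iff, Walk.support_cons, List.mem_cons]
      tauto

lemma Preconnected.exists_walk_forall_mem_finset (hG : G.Preconnected) (r : V) (s : Finset V)
    (hs : ∀ a ∈ s, ∀ b, G.dist r b < G.dist r a → b ∈ s) {z : V} (hz : z ∈ s) :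
    ∃ w : G.Walk r z, (∀ x ∈ s, x ∈ w.support) ∧ w.length + G.dist r z ≤ 2 * (#s - 1) := by
  classical
  induction s using Finset.induction_on_max_value (G.dist r) generalizing z with
  | empty => simp at hz
  | insert a s ha hmax ih =>
    have hs' : ∀ x ∈ s, ∀ b, G.dist r b < G.dist r x → b ∈ s := fun x hx b hb =>
      (mem_insert.mp (hs x (mem_insert_of_mem hx) b hb)).resolve_left
        (by rintro rfl; exact (hmax x hx).not_gt hb)
    by_cases har : r = a
    · subst har
      have hs0 : s = ∅ := eq_empty_of_forall_notMem fun x hx => by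
        have hx0 : G.dist r x = 0 := by simpa using hmax x hx
        rw [(hG r x).dist_eq_zero_iff] at hx0
        exact ha (hx0 ▸ hx)
      subst hs0
      obtain rfl : z = r := by simpa using hz
      exact ⟨Walk.nil, by simp, by simp⟩
    obtain ⟨y, hya, hdist⟩ := (hG r a).exists_adj_dist_add_one_eq har
    have hy : y ∈ s := (mem_insert.mp (hs a (mem_insert_self a s) y (by omega))).resolve_left
      (by rintro rfl; omega)
    have hcard : #(insert a s) - 1 = #s := by simp [card_insert_of_notMem ha]
    have hcard_pos : 0 < #s := card_pos.mpr ⟨y, hy⟩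
    rcases mem_insert.mp hz with rfl | hz
    · obtain ⟨w, hw, hlen⟩ := ih hs' hy
      refine ⟨w.concat hya, fun x hx => ?_, ?_⟩
      · rcases mem_insert.mp hx with rfl | hx
        · simp [Walk.support_concat]
        · simp [Walk.support_concat, hw x hx]
      · rw [Walk.length_concat, hcard]
        omega
    · obtain ⟨w, hw, hlen⟩ := ih hs' hz
      obtain ⟨w', hlen', hw'⟩ := w.exists_detour (hw y hy) hya
      refine ⟨w', fun x hx => hw' x ((mem_insert.mp hx).imp id (hw x)), ?_⟩
      rw [hlen', hcard]
      omega

lemma Preconnected.exists_walk_forall_mem_support [Fintype V] (hG : G.Preconnected) (r z : V) :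
    ∃ w : G.Walk r z, (∀ x, x ∈ w.support) ∧
      w.length + G.dist r z ≤ 2 * (Fintype.card V - 1) := by
  obtain ⟨w, hw, hlen⟩ :=
    hG.exists_walk_forall_mem_finset r univ (fun _ _ b _ => mem_univ b) (mem_univ z)
  exact ⟨w, fun x => hw x (mem_univ x), hlen⟩

end SimpleGraph

open SimpleGraph

section Burning

variable {V : Type*} {G : SimpleGraph V}

lemma burningNumber_le_of_forall_dist_lt (hG : G.Preconnected) {k : ℕ} (c : V)
    (hc : ∀ v, G.dist c v < k) : burningNumber G ≤ k :=
  Nat.sInf_le ⟨fun _ => c, fun v => ⟨⟨0, (hc c).trans_le' (Nat.zero_le _)⟩, hG c v,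
    Nat.le_sub_one_of_lt (hc v)⟩⟩

lemma burningNumber_le_of_walk {k : ℕ} {u v : V} (w : G.Walk u v) (hw : ∀ x, x ∈ w.support)
    (hlen : w.length < k * k) : burningNumber G ≤ k := by
  refine Nat.sInf_le ⟨fun i => w.getVert ((k - 1 - i) * (k - i)), fun x => ?_⟩
  obtain ⟨q, rfl, hq⟩ := Walk.mem_support_iff_exists_getVert.mp (hw x)
  set m := Nat.sqrt q
  have hm : m < k := Nat.sqrt_lt'.mpr (by rw [sq]; omega)
  have hq_hi : q ≤ m * (m + 1) + m := by nlinarith [Nat.lt_succ_sqrt' q]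
  have hq_lo : m * (m + 1) ≤ q + m := by nlinarith [Nat.sqrt_le' q]
  have hi : k - 1 - (k - 1 - m) = m := by omega
  have hcenter : (k - 1 - (k - 1 - m)) * (k - (k - 1 - m)) = m * (m + 1) := by
    rw [hi, show k - (k - 1 - m) = m + 1 by omega]
  refine ⟨⟨k - 1 - m, by omega⟩, (w.take _).reachable.symm.trans (w.take q).reachable, ?_⟩
  dsimp only
  rw [hcenter, hi]
  rcases le_total (m * (m + 1)) q with h | h
  · exact (w.dist_getVert_le h).trans (by omega)
  · exact SimpleGraph.dist_comm.trans_le <| (w.dist_getVert_le h).trans (by omega)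

end Burning

lemma two_mul_le_mul_succ_of_sqrt_le {n k : ℕ} (h : √(2 * n + 1 / 4) - 1 / 2 ≤ k) :
    2 * n ≤ k * (k + 1) := by
  have hsq := Real.sq_sqrt (by positivity : (0 : ℝ) ≤ 2 * n + 1 / 4)
  have := Real.sqrt_nonneg (2 * (n : ℝ) + 1 / 4)
  exact_mod_cast (by nlinarith : (2 * n : ℝ) ≤ k * (k + 1))

theorem burning_le_ceil_sqrt_two_n_general {V : Type*} [Fintype V] (G : SimpleGraph V)
    (hG : G.Connected) :
    burningNumber G ≤ ⌈Real.sqrt (2 * (Fintype.card V) + 1 / 4) - 1 / 2⌉₊ := by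
  set k := ⌈Real.sqrt (2 * (Fintype.card V) + 1 / 4) - 1 / 2⌉₊
  have hk : 2 * Fintype.card V ≤ k * (k + 1) := two_mul_le_mul_succ_of_sqrt_le (Nat.le_ceil _)
  obtain ⟨r⟩ := hG.nonempty
  have hn : 0 < Fintype.card V := Fintype.card_pos_iff.mpr ⟨r⟩
  by_cases! hr : ∀ z, G.dist r z < k
  · exact burningNumber_le_of_forall_dist_lt hG.preconnected r hr
  obtain ⟨z, hz⟩ := hr
  obtain ⟨w, hw, hlen⟩ := hG.preconnected.exists_walk_forall_mem_support r z
  refine burningNumber_le_of_walk w hw ?_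
  rw [Nat.mul_succ] at hk
  omega

theorem burning_le_ceil_sqrt_two_n {V : Type*} [Fintype V] (G : SimpleGraph V)
    (hG : G.Connected) (hn : 1 ≤ Fintype.card V) :
    burningNumber G ≤ ⌈Real.sqrt (2 * (Fintype.card V) + 1 / 4) - 1 / 2⌉₊ :=
  burning_le_ceil_sqrt_two_n_general G hG
end

section
/- Let n_1, ..., n_p and k be positive integers such that n_1 + n_2 + ... + n_p + k(p−1) ≤ k². Then the disjoint union of paths P_{n_1} ∪ P_{n_2} ∪ ... ∪ P_{n_p} has burning number at most k. -/
/-- The disjoint union of the path graphs `P_{n 0}, …, P_{n (p-1)}`: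
vertices are pairs `⟨i, j⟩` with `j : Fin (n i)`, and two vertices are adjacent
iff they lie in the same component and are consecutive on that path. -/
def pathsUnion (p : ℕ) (n : Fin p → ℕ) : SimpleGraph (Σ i : Fin p, Fin (n i)) where
  Adj a b := a.1 = b.1 ∧ ((a.2 : ℕ) + 1 = (b.2 : ℕ) ∨ (b.2 : ℕ) + 1 = (a.2 : ℕ))
  symm := ⟨by rintro a b ⟨h1, h2⟩; exact ⟨h1.symm, h2.symm⟩⟩
  loopless := ⟨by rintro a ⟨-, h | h⟩ <;> omega⟩

/-!
A ball of radius `r` in a path covers `2r + 1` consecutive vertices, so it suffices to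
distribute the radii `0, …, k - 1` among the paths so that `P_{n_i}` receives balls of total
size at least `n_i`; on each path the balls are then laid side by side. The distribution is
built by induction on `k`: the largest radius `k - 1` goes to a longest path, which is shortened
by `2k - 1` if it is longer than that and discarded otherwise. The hypothesis, in the form
`∑ n_i + k p ≤ k² + k`, survives both moves.
-/

open Finset Function

section RadiusAssignment

variable {ι : Type*} [DecidableEq ι]

lemma sum_filter_update_range_succ (f : ℕ → ι) (k : ℕ) (i j : ι) :
    ∑ r ∈ range (k + 1) with update f k i r = j, (2 * r + 1) =
      ∑ r ∈ range k with f r = j, (2 * r + 1) + if i = j then 2 * k + 1 else 0 := by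
  rw [sum_filter, sum_filter, sum_range_succ, update_self]
  congr 1
  refine sum_congr rfl fun r hr => ?_
  rw [update_of_ne (mem_range.1 hr).ne]

theorem exists_radius_assignment [Nonempty ι] (m : ι → ℕ) (k : ℕ) (s : Finset ι)
    (h : ∑ i ∈ s, m i + k * #s ≤ k ^ 2 + k) :
    ∃ f : ℕ → ι, ∀ i ∈ s, m i ≤ ∑ r ∈ range k with f r = i, (2 * r + 1) := by
  induction k generalizing m s with
  | zero =>
    refine ⟨fun _ => Classical.arbitrary ι, fun i hi => ?_⟩
    have h0 : ∑ i ∈ s, m i = 0 := by simpa using h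
    simp [sum_eq_zero_iff.1 h0 i hi]
  | succ k ih =>
    rcases s.eq_empty_or_nonempty with rfl | hs
    · exact ⟨fun _ => Classical.arbitrary ι, by simp⟩
    obtain ⟨i, hi, hmax⟩ := s.exists_max_image m hs
    have hsum := add_sum_erase s m hi
    have hcard := card_erase_add_one hi
    by_cases hbig : 2 * k + 1 < m i
    · obtain ⟨f, hf⟩ := ih (update m i (m i - (2 * k + 1))) s (by
        rw [sum_update_of_mem hi, sdiff_singleton_eq_erase]
        ring_nf at h ⊢
        omega)
      refine ⟨update f k i, fun j hj => ?_⟩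
      rw [sum_filter_update_range_succ]
      rcases eq_or_ne i j with rfl | hij
      · have := hf i hj
        rw [update_self] at this
        rw [if_pos rfl]
        omega
      · simpa [hij, update_of_ne hij.symm] using hf j hj
    · obtain ⟨f, hf⟩ := ih m (s.erase i) (by
        have hle : ∑ j ∈ s.erase i, m j ≤ #(s.erase i) * m i := by
          simpa using
            sum_le_card_nsmul (s.erase i) m (m i) fun j hj => hmax j (mem_of_mem_erase hj)
        -- if `m i + #(s.erase i) ≤ k`, the sum is at most `#(s.erase i) * (m i + k) ≤ k ^ 2`
        rcases le_or_gt (k + 1) (m i + #(s.erase i)) with hlarge | hsmall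
        · nlinarith
        · nlinarith)
      refine ⟨update f k i, fun j hj => ?_⟩
      rw [sum_filter_update_range_succ]
      rcases eq_or_ne i j with rfl | hij
      · rw [if_pos rfl]
        omega
      · simpa [hij] using hf j (mem_erase.2 ⟨hij.symm, hj⟩)

end RadiusAssignment

lemma exists_centers_of_le_sum (S : Finset ℕ) {m : ℕ} (h : m ≤ ∑ r ∈ S, (2 * r + 1)) :
    ∃ c : ℕ → ℕ, ∀ u < m, ∃ r ∈ S, c r ≤ u + r ∧ u ≤ c r + r := by
  classical
  induction S using Finset.induction_on generalizing m with
  | empty => exact ⟨id, fun u hu => by simp at h; omega⟩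
  | @insert r S hr ih =>
    rw [sum_insert hr] at h
    obtain ⟨c, hc⟩ := ih (m := m - (2 * r + 1)) (by omega)
    refine ⟨update c r (m - (2 * r + 1) + r), fun u hu => ?_⟩
    by_cases hlow : u < m - (2 * r + 1)
    · obtain ⟨r', hr', hcov⟩ := hc u hlow
      have hne : r' ≠ r := by rintro rfl; exact hr hr'
      exact ⟨r', mem_insert_of_mem hr', by simpa [update_of_ne hne] using hcov⟩
    · exact ⟨r, mem_insert_self r S, by simp only [update_self]; omega⟩

lemma exists_fin_centers_of_le_sum (S : Finset ℕ) {m : ℕ} (hm : 0 < m)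
    (h : m ≤ ∑ r ∈ S, (2 * r + 1)) :
    ∃ c : ℕ → Fin m, ∀ u : Fin m, ∃ r ∈ S, (c r : ℕ) ≤ u + r ∧ (u : ℕ) ≤ c r + r := by
  obtain ⟨c, hc⟩ := exists_centers_of_le_sum S h
  -- clamping a center into `[0, m - 1]` moves it no farther from any vertex of the path
  refine ⟨fun r => ⟨min (c r) (m - 1), by omega⟩, fun u => ?_⟩
  obtain ⟨r, hr, hcov⟩ := hc u u.isLt
  exact ⟨r, hr, by simp only; omega⟩

lemma burningNumber_le_of_forall_mem_ball {V : Type*} {G : SimpleGraph V} {k : ℕ} (c : ℕ → V)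
    (h : ∀ v, ∃ r < k, v ∈ ball G (c r) r) : burningNumber G ≤ k := by
  refine Nat.sInf_le ⟨fun i => c (k - 1 - i), fun v => ?_⟩
  obtain ⟨r, hr, hv⟩ := h v
  refine ⟨⟨k - 1 - r, by omega⟩, ?_⟩
  simpa [show k - 1 - (k - 1 - r) = r by omega] using hv

section PathsUnion

variable {p : ℕ} {n : Fin p → ℕ}

lemma pathsUnion_exists_walk (j : Fin p) (a : Fin (n j)) :
    ∀ (d : ℕ) (b : Fin (n j)), (a : ℕ) + d = b →
      ∃ w : (pathsUnion p n).Walk ⟨j, a⟩ ⟨j, b⟩, w.length = d := by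
  intro d
  induction d generalizing a with
  | zero =>
    intro b hab
    obtain rfl : a = b := Fin.ext (by omega)
    exact ⟨.nil, rfl⟩
  | succ d ih =>
    intro b hab
    have hlt : (a : ℕ) + 1 < n j := by omega
    obtain ⟨w, hw⟩ := ih ⟨a + 1, hlt⟩ b (by simp only; omega)
    have hadj : (pathsUnion p n).Adj ⟨j, a⟩ ⟨j, ⟨a + 1, hlt⟩⟩ := ⟨rfl, Or.inl rfl⟩
    exact ⟨.cons hadj w, by simp [hw]⟩

lemma mem_ball_pathsUnion {j : Fin p} {a b : Fin (n j)} {r : ℕ}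
    (hab : (a : ℕ) ≤ b + r) (hba : (b : ℕ) ≤ a + r) :
    (⟨j, b⟩ : Σ i, Fin (n i)) ∈ ball (pathsUnion p n) ⟨j, a⟩ r := by
  rcases le_total (a : ℕ) b with h | h
  · obtain ⟨w, hw⟩ := pathsUnion_exists_walk j a (b - a) b (by omega)
    exact ⟨w.reachable, (SimpleGraph.dist_le w).trans (by omega)⟩
  · obtain ⟨w, hw⟩ := pathsUnion_exists_walk j b (a - b) a (by omega)
    exact ⟨w.reachable.symm,
      SimpleGraph.dist_comm.trans_le ((SimpleGraph.dist_le w).trans (by omega))⟩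

end PathsUnion

theorem burning_pathsUnion_le_general {p k : ℕ} (hp : 1 ≤ p) (n : Fin p → ℕ)
    (hn : ∀ i, 1 ≤ n i) (h : (∑ i, n i) + k * (p - 1) ≤ k ^ 2) :
    burningNumber (pathsUnion p n) ≤ k := by
  have : Nonempty (Fin p) := ⟨⟨0, hp⟩⟩
  obtain ⟨f, hf⟩ := exists_radius_assignment n k univ (by
    obtain ⟨q, rfl⟩ := Nat.exists_eq_add_of_le' hp
    rw [card_univ, Fintype.card_fin]
    rw [Nat.add_sub_cancel] at h
    linarith)
  choose c hc using fun j => exists_fin_centers_of_le_sum _ (hn j) (hf j (mem_univ j))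
  refine burningNumber_le_of_forall_mem_ball (fun r => ⟨f r, c (f r) r⟩) fun ⟨j, u⟩ => ?_
  obtain ⟨r, hr, hcov⟩ := hc j u
  obtain ⟨hrk, rfl⟩ := mem_filter.1 hr
  exact ⟨r, mem_range.1 hrk, mem_ball_pathsUnion hcov.1 hcov.2⟩

theorem burning_pathsUnion_le {p k : ℕ} (hp : 1 ≤ p) (hk : 1 ≤ k) (n : Fin p → ℕ)
    (hn : ∀ i, 1 ≤ n i) (h : (∑ i, n i) + k * (p - 1) ≤ k ^ 2) :
    burningNumber (pathsUnion p n) ≤ k :=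
  burning_pathsUnion_le_general hp n hn h
end

section
/- The path P_n on n ≥ 1 vertices has burning number b(P_n) = ⌈√n⌉. -/
/-!
A ball of radius `r` in a path has at most `2r + 1` vertices, so balls of radii
`k - 1, …, 1, 0` cover at most `1 + 3 + ⋯ + (2k - 1) = k²` vertices; hence `n ≤ b(Pₙ)²`.
Conversely, if `n ≤ k²`, the intervals `[r², (r + 1)²)` for `r < k` cover `{0, …, n - 1}`,
and the one of length `2r + 1` is the ball of radius `r` about `r² + r` (moved to `n - 1` if
that lies beyond the path, which only brings it closer to the vertices of the path).
-/

open SimpleGraph (Reachable Walk pathGraph pathGraph_adj pathGraph_preconnected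
  dist_eq_one_iff_adj)

lemma sum_range_two_mul_add_one (k : ℕ) : ∑ j ∈ Finset.range k, (2 * j + 1) = k * k := by
  induction k with
  | zero => rfl
  | succ k ih => rw [Finset.sum_range_succ, ih]; ring

section Burning

variable {V : Type*} (G : SimpleGraph V)

def IsBurningSequence {k : ℕ} (x : Fin k → V) : Prop :=
  ∀ v : V, ∃ i : Fin k, v ∈ ball G (x i) (k - 1 - (i : ℕ))

lemma mem_ball_self (u : V) (r : ℕ) : u ∈ ball G u r :=
  ⟨Reachable.refl u, by simp⟩

lemma burningNumber_le {k : ℕ} {x : Fin k → V} (hx : IsBurningSequence G x) :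
    burningNumber G ≤ k :=
  Nat.sInf_le ⟨x, hx⟩

lemma exists_isBurningSequence_burningNumber [Finite V] :
    ∃ x : Fin (burningNumber G) → V, IsBurningSequence G x := by
  have : Fintype V := Fintype.ofFinite V
  have hne : ∃ k, ∃ x : Fin k → V, IsBurningSequence G x :=
    ⟨Fintype.card V, (Fintype.equivFin V).symm,
      fun v => ⟨Fintype.equivFin V v, by simpa using mem_ball_self G v _⟩⟩
  exact Nat.sInf_mem hne

lemma IsBurningSequence.card_le_mul_self {G} {k : ℕ} {x : Fin k → V}
    (hx : IsBurningSequence G x) (hball : ∀ u r, (ball G u r).ncard ≤ 2 * r + 1) :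
    Nat.card V ≤ k * k := by
  have hcover : ⋃ i, ball G (x i) (k - 1 - i) = Set.univ :=
    Set.eq_univ_of_forall fun v => Set.mem_iUnion.mpr (hx v)
  calc Nat.card V = (⋃ i, ball G (x i) (k - 1 - i)).ncard := by rw [hcover, Set.ncard_univ]
    _ ≤ ∑ i : Fin k, (ball G (x i) (k - 1 - i)).ncard := Set.ncard_iUnion_le_of_fintype _
    _ ≤ ∑ i : Fin k, (2 * (k - 1 - i) + 1) := Finset.sum_le_sum fun i _ => hball _ _
    _ = k * k := by
      rw [Fin.sum_univ_eq_sum_range (fun j => 2 * (k - 1 - j) + 1),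
        Finset.sum_range_reflect (fun j => 2 * j + 1), sum_range_two_mul_add_one]

end Burning

section PathGraph

variable {n : ℕ}

lemma SimpleGraph.Walk.natDist_le_length {u v : Fin n} (p : (pathGraph n).Walk u v) :
    Nat.dist u v ≤ p.length := by
  induction p with
  | nil => simp
  | cons h _ ih =>
    rw [pathGraph_adj] at h
    simp only [Walk.length_cons, Nat.dist] at ih ⊢
    omega

lemma pathGraph_dist_le_of_val_eq_add (k : ℕ) {u v : Fin n} (h : v.val = u.val + k) :
    (pathGraph n).dist u v ≤ k := by
  induction k generalizing v with
  | zero => simp [Fin.ext (h.trans (add_zero _))]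
  | succ k ih =>
    let w : Fin n := ⟨u.val + k, by omega⟩
    have hwv : (pathGraph n).Adj w v := pathGraph_adj.mpr (Or.inl (by simp [w, h]; omega))
    calc (pathGraph n).dist u v ≤ (pathGraph n).dist u w + (pathGraph n).dist w v :=
          (pathGraph_preconnected n u w).dist_triangle_left v
      _ ≤ k + 1 := add_le_add (ih rfl) (dist_eq_one_iff_adj.mpr hwv).le

lemma pathGraph_dist_le_natDist (u v : Fin n) : (pathGraph n).dist u v ≤ Nat.dist u v := by
  wlog h : u.val ≤ v.val generalizing u v
  · rw [SimpleGraph.dist_comm, Nat.dist_comm]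
    exact this v u (by omega)
  rw [Nat.dist_eq_sub_of_le h]
  exact pathGraph_dist_le_of_val_eq_add _ (by omega)

lemma pathGraph_dist (u v : Fin n) : (pathGraph n).dist u v = Nat.dist u v := by
  refine (pathGraph_dist_le_natDist u v).antisymm ?_
  obtain ⟨p, hp⟩ := (pathGraph_preconnected n u v).exists_walk_length_eq_dist
  exact hp ▸ p.natDist_le_length

lemma mem_ball_pathGraph {u v : Fin n} {r : ℕ} :
    v ∈ ball (pathGraph n) u r ↔ Nat.dist u v ≤ r := by
  simp [ball, pathGraph_dist, pathGraph_preconnected n u v]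

lemma ncard_ball_pathGraph_le (u : Fin n) (r : ℕ) :
    (ball (pathGraph n) u r).ncard ≤ 2 * r + 1 := by
  calc (ball (pathGraph n) u r).ncard ≤ (Set.Icc (u - r : ℕ) (u + r)).ncard := by
        refine Set.ncard_le_ncard_of_injOn Fin.val (fun v hv => ?_) Fin.val_injective.injOn
        rw [mem_ball_pathGraph, Nat.dist] at hv
        simp only [Set.mem_Icc]
        omega
    _ ≤ 2 * r + 1 := by rw [Set.ncard_Icc_nat]; omega

lemma Nat.dist_sqrt_mul_succ_le (v : ℕ) : Nat.dist (sqrt v * (sqrt v + 1)) v ≤ sqrt v := by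
  have h₁ : sqrt v * sqrt v ≤ v := sqrt_le v
  have h₂ : v < (sqrt v + 1) * (sqrt v + 1) := lt_succ_sqrt v
  have h₃ : (sqrt v + 1) * (sqrt v + 1) = sqrt v * sqrt v + 2 * sqrt v + 1 := by ring
  rw [Nat.dist, Nat.mul_succ]
  omega

lemma Nat.dist_min_le {c m v : ℕ} (hv : v ≤ m) : Nat.dist (min c m) v ≤ Nat.dist c v := by
  simp only [Nat.dist]
  omega

lemma exists_isBurningSequence_pathGraph {k : ℕ} (hn : 0 < n) (hnk : n ≤ k * k) :
    ∃ x : Fin k → Fin n, IsBurningSequence (pathGraph n) x := by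
  refine ⟨fun i => ⟨min ((k - 1 - i) * (k - 1 - i + 1)) (n - 1), by omega⟩, fun v => ?_⟩
  have hsk : Nat.sqrt v < k := Nat.sqrt_lt'.mpr (by rw [sq]; omega)
  refine ⟨⟨k - 1 - Nat.sqrt v, by omega⟩, mem_ball_pathGraph.mpr ?_⟩
  have hi : k - 1 - (k - 1 - Nat.sqrt v) = Nat.sqrt v := by omega
  simp only [hi]
  exact (Nat.dist_min_le (by omega)).trans (Nat.dist_sqrt_mul_succ_le v)

lemma burningNumber_pathGraph_le {k : ℕ} (hnk : n ≤ k * k) :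
    burningNumber (pathGraph n) ≤ k := by
  rcases n.eq_zero_or_pos with rfl | hn
  · exact (burningNumber_le (pathGraph 0) (x := Fin.elim0) fun v => v.elim0).trans k.zero_le
  · obtain ⟨x, hx⟩ := exists_isBurningSequence_pathGraph hn hnk
    exact burningNumber_le _ hx

lemma le_burningNumber_mul_self_pathGraph (n : ℕ) :
    n ≤ burningNumber (pathGraph n) * burningNumber (pathGraph n) := by
  obtain ⟨x, hx⟩ := exists_isBurningSequence_burningNumber (pathGraph n)
  simpa using hx.card_le_mul_self ncard_ball_pathGraph_le

end PathGraph

lemma Nat.ceil_sqrt_le_iff {n k : ℕ} : ⌈√(n : ℝ)⌉₊ ≤ k ↔ n ≤ k * k := by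
  rw [Nat.ceil_le, Real.sqrt_le_left (Nat.cast_nonneg k), sq]
  exact_mod_cast Iff.rfl

theorem burning_pathGraph_general (n : ℕ) :
    burningNumber (SimpleGraph.pathGraph n) = ⌈Real.sqrt n⌉₊ :=
  le_antisymm (burningNumber_pathGraph_le (Nat.ceil_sqrt_le_iff.mp le_rfl))
    (Nat.ceil_sqrt_le_iff.mpr (le_burningNumber_mul_self_pathGraph n))

theorem burning_pathGraph (n : ℕ) (hn : 1 ≤ n) :
    burningNumber (SimpleGraph.pathGraph n) = ⌈Real.sqrt n⌉₊ :=
  burning_pathGraph_general n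
end

section
/- Let r ≥ 1 be an integer and let T be a binary tree of depth r (a rooted tree of height r in which every vertex has at most two children). If T has a leaf of depth less than r, or T has a vertex of depth less than r−1 with exactly one child, then b(T) ≤ r. -/
namespace SimpleGraph

variable {V : Type*} {G : SimpleGraph V}

def children (G : SimpleGraph V) (root v : V) : Set V :=
  {u | G.Adj v u ∧ G.dist root u = G.dist root v + 1}

def Walk.offPathChildren {root v : V} (p : G.Walk root v) (i : ℕ) : Set V :=
  G.children root (p.getVert i) \ {p.getVert (i + 1)}

lemma Walk.dist_getVert_of_length_eq_dist {u v : V} {p : G.Walk u v}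
    (hp : p.length = G.dist u v) (n : ℕ) : G.dist u (p.getVert n) = min n p.length := by
  rw [← length_eq_dist_of_subwalk hp (p.isSubwalk_take n), Walk.take_length]

lemma Walk.getVert_succ_mem_children {root v : V} {p : G.Walk root v}
    (hp : p.length = G.dist root v) {i : ℕ} (hi : i < p.length) :
    p.getVert (i + 1) ∈ G.children root (p.getVert i) := by
  refine ⟨p.adj_getVert_succ hi, ?_⟩
  rw [dist_getVert_of_length_eq_dist hp, dist_getVert_of_length_eq_dist hp]
  omega

lemma Connected.exists_mem_children_of_dist_add_dist_eq (hG : G.Connected) {root w u : V}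
    (h : G.dist root w + G.dist w u = G.dist root u) (hwu : w ≠ u) :
    ∃ b ∈ G.children root w, G.dist root b + G.dist b u = G.dist root u := by
  obtain ⟨q, hq⟩ := hG.exists_walk_length_eq_dist w u
  have hpos : 0 < q.length := hq ▸ hG.pos_dist_of_ne hwu
  have hwb : G.dist w (q.getVert 1) = 1 := by
    rw [q.dist_getVert_of_length_eq_dist hq]
    omega
  have hbu : G.dist (q.getVert 1) u = q.length - 1 := by
    rw [← length_eq_dist_of_subwalk hq (q.isSubwalk_drop 1), Walk.drop_length]
  have h₁ : G.dist root u ≤ G.dist root (q.getVert 1) + G.dist (q.getVert 1) u :=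
    hG.dist_triangle
  have h₂ : G.dist root (q.getVert 1) ≤ G.dist root w + G.dist w (q.getVert 1) :=
    hG.dist_triangle
  exact ⟨q.getVert 1, ⟨dist_eq_one_iff_adj.mp hwb, by omega⟩, by omega⟩

theorem Walk.exists_dist_add_lt_of_offPathChildren_subset (hG : G.Connected) {root v : V}
    {p : G.Walk root v} (hp : p.length = G.dist root v) {r : ℕ}
    (hdepth : ∀ u, G.dist root u ≤ r) {s : ℕ → V}
    (hs_near : ∀ i ≤ p.length, G.dist (s i) (p.getVert i) + i < r)
    (hs_child : ∀ i ≤ p.length, p.offPathChildren i ⊆ {s i})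
    (u : V) : ∃ i ≤ p.length, G.dist (s i) u + i < r := by
  classical
  have hdepth_p (i : ℕ) : G.dist root (p.getVert i) = min i p.length :=
    p.dist_getVert_of_length_eq_dist hp i
  -- a shortest path from `root` to `u` can be taken to leave `p` at `p_j`
  let OnGeodesic (i : ℕ) : Prop := i + G.dist (p.getVert i) u = G.dist root u
  set j := Nat.findGreatest OnGeodesic p.length
  have hj_le : j ≤ p.length := Nat.findGreatest_le _
  have hj : OnGeodesic j := Nat.findGreatest_spec (Nat.zero_le _) (by simp [OnGeodesic])
  have hdepth_j : G.dist root (p.getVert j) = j := by rw [hdepth_p]; omega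
  refine ⟨j, hj_le, ?_⟩
  by_cases hu : p.getVert j = u
  · exact hu ▸ hs_near j hj_le
  obtain ⟨b, hb, hbu⟩ :=
    hG.exists_mem_children_of_dist_add_dist_eq (by rw [hdepth_j]; exact hj) hu
  have hb_off : b ≠ p.getVert (j + 1) := by
    rintro rfl
    have hj_lt : j < p.length := by
      have := hb.2
      rw [hdepth_p, hdepth_p] at this
      omega
    exact Nat.findGreatest_is_greatest (Nat.lt_succ_self j) hj_lt
      (show j + 1 + _ = _ by rw [hdepth_p, min_eq_left hj_lt] at hbu; exact hbu)
  have hb_s : b = s j := hs_child j hj_le ⟨hb, hb_off⟩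
  have := hb.2
  have := hdepth u
  rw [← hb_s]
  omega

lemma exists_dist_le_ncard_of_subset_neighborSet [Finite V] {S : Set V} {w : V}
    (hS : S ⊆ G.neighborSet w) : ∃ x, G.dist x w ≤ S.ncard ∧ (S.Nonempty → x ∈ S) := by
  rcases S.eq_empty_or_nonempty with rfl | ⟨x, hx⟩
  · exact ⟨w, by simp, by simp⟩
  · refine ⟨x, ?_, fun _ => hx⟩
    rw [dist_comm, dist_eq_one_iff_adj.mpr (hS hx)]
    exact (Set.ncard_pos).mpr ⟨x, hx⟩

lemma burningNumber_le_of_forall_exists_dist_add_lt (hG : G.Connected) {r : ℕ} (s : ℕ → V)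
    (hs : ∀ u, ∃ i, G.dist (s i) u + i < r) : burningNumber G ≤ r :=
  Nat.sInf_le ⟨fun i => s i, fun u => by
    obtain ⟨i, hiu⟩ := hs u
    exact ⟨⟨i, by omega⟩, hG.preconnected _ _, by dsimp only; omega⟩⟩

theorem burningNumber_le_of_ncard_offPathChildren [Finite V] (hG : G.Connected) {root v : V}
    {r : ℕ} (hdepth : ∀ u, G.dist root u ≤ r) (p : G.Walk root v)
    (hp : p.length = G.dist root v)
    (hspine : ∀ i ≤ p.length,
      (p.offPathChildren i).ncard ≤ 1 ∧ i + (p.offPathChildren i).ncard < r) :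
    burningNumber G ≤ r := by
  choose s hs_dist hs_mem using fun i =>
    exists_dist_le_ncard_of_subset_neighborSet (G := G) (w := p.getVert i)
      (S := p.offPathChildren i) fun _ hx => hx.1.1
  refine burningNumber_le_of_forall_exists_dist_add_lt hG s fun u => ?_
  obtain ⟨i, -, hiu⟩ := p.exists_dist_add_lt_of_offPathChildren_subset hG hp hdepth
    (fun i hi => by have := hs_dist i; have := hspine i hi; omega)
    (fun i hi y hy => Set.ncard_le_one_iff_subsingleton.mp (hspine i hi).1 hy
      (hs_mem i ⟨y, hy⟩)) u
  exact ⟨i, hiu⟩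

end SimpleGraph

open SimpleGraph

theorem burning_le_of_defective_binary_tree_general {V : Type*} [Fintype V]
    (T : SimpleGraph V) (root : V) (hT : T.IsTree) (r : ℕ)
    (hdepth : ∀ v : V, T.dist root v ≤ r)
    (hbin : ∀ v : V, {u : V | T.Adj v u ∧ T.dist root u = T.dist root v + 1}.ncard ≤ 2)
    (h : (∃ v : V, T.dist root v < r ∧
            {u : V | T.Adj v u ∧ T.dist root u = T.dist root v + 1} = ∅) ∨
         (∃ v : V, T.dist root v < r - 1 ∧
            {u : V | T.Adj v u ∧ T.dist root u = T.dist root v + 1}.ncard = 1)) :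
    burningNumber T ≤ r := by
  have hG := hT.connected
  obtain ⟨v, hv_le, hv_lt⟩ : ∃ v, (T.children root v).ncard ≤ 1 ∧
      T.dist root v + (T.children root v).ncard < r := by
    rcases h with ⟨v, hv, hleaf⟩ | ⟨v, hv, hone⟩
    · exact ⟨v, by simp [children, hleaf], by simpa [children, hleaf]⟩
    · exact ⟨v, hone.le, by rw [children, hone]; omega⟩
  obtain ⟨p, hp⟩ := hG.exists_walk_length_eq_dist root v
  refine burningNumber_le_of_ncard_offPathChildren hG hdepth p hp fun i hi => ?_
  unfold Walk.offPathChildren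
  rcases hi.lt_or_eq with hi | rfl
  · have := Set.ncard_sdiff_singleton_of_mem (p.getVert_succ_mem_children hp hi)
    have := hbin (p.getVert i)
    change (T.children root _).ncard ≤ 2 at this
    omega
  · have := Set.ncard_sdiff_singleton_le (T.children root (p.getVert p.length))
      (p.getVert (p.length + 1))
    rw [Walk.getVert_length] at this ⊢
    omega

theorem burning_le_of_defective_binary_tree {V : Type*} [Fintype V]
    (T : SimpleGraph V) (root : V) (hT : T.IsTree) (r : ℕ) (hr : 1 ≤ r)
    (hdepth : ∀ v : V, T.dist root v ≤ r) (hmax : ∃ v : V, T.dist root v = r)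
    (hbin : ∀ v : V, {u : V | T.Adj v u ∧ T.dist root u = T.dist root v + 1}.ncard ≤ 2)
    (h : (∃ v : V, T.dist root v < r ∧
            {u : V | T.Adj v u ∧ T.dist root u = T.dist root v + 1} = ∅) ∨
         (∃ v : V, T.dist root v < r - 1 ∧
            {u : V | T.Adj v u ∧ T.dist root u = T.dist root v + 1}.ncard = 1)) :
    burningNumber T ≤ r :=
  burning_le_of_defective_binary_tree_general T root hT r hdepth hbin h
end
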